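/- arXiv:2105.10544 — 5 statements merged into one kernel-verified Lean document; each statement's English description precedes it below -/
import Mathlib

section
/- Let u(t,ξ) = a·cos(√(ξ/m)·t) + (b/√(ξ/m))·sin(√(ξ/m)·t) be the free-vibration response of an undamped oscillator with stiffness ξ uniformly distributed on [k_a, k_b] with 0 < k_a < k_b. Then the expectation E[u](t) = (1/(k_b−k_a)) ∫_{k_a}^{k_b} u(t,ξ) dξ tends to 0 as t → ∞. -/
open Filter Real

lemma aux_mul_zero {f g : ℝ → ℝ} (hf : ∀ t, |f t| ≤ 1)
    (hg : Tendsto g atTop (nhds 0)) :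
    Tendsto (fun t => f t * g t) atTop (nhds 0) := by
  apply squeeze_zero_norm (fun t => ?_) (by simpa using hg.abs)
  simp only [Real.norm_eq_abs, abs_mul]
  exact mul_le_of_le_one_left (abs_nonneg _) (hf t)

lemma sin_abs_le (c t : ℝ) : |Real.sin (c*t)| ≤ 1 :=
  abs_le.mpr ⟨Real.neg_one_le_sin _, Real.sin_le_one _⟩

lemma cos_abs_le (c t : ℝ) : |Real.cos (c*t)| ≤ 1 :=
  abs_le.mpr ⟨Real.neg_one_le_cos _, Real.cos_le_one _⟩

lemma Flim (c C D : ℝ) :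
    Tendsto (fun t => C * (c * Real.sin (c*t) / t + Real.cos (c*t) / t^2)
      - D * Real.cos (c*t) / t) atTop (nhds 0) := by
  have hinv : Tendsto (fun t : ℝ => t⁻¹) atTop (nhds 0) := tendsto_inv_atTop_zero
  have hinv2 : Tendsto (fun t : ℝ => (t^2)⁻¹) atTop (nhds 0) := by
    have := hinv.mul hinv
    simp only [mul_zero] at this
    refine this.congr (fun t => ?_)
    rw [sq, mul_inv]
  have h1 : Tendsto (fun t => Real.sin (c*t) * t⁻¹) atTop (nhds 0) :=
    aux_mul_zero (sin_abs_le c) hinv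
  have h2 : Tendsto (fun t => Real.cos (c*t) * (t^2)⁻¹) atTop (nhds 0) :=
    aux_mul_zero (cos_abs_le c) hinv2
  have h3 : Tendsto (fun t => Real.cos (c*t) * t⁻¹) atTop (nhds 0) :=
    aux_mul_zero (cos_abs_le c) hinv
  have := ((h1.const_mul (C*c)).add (h2.const_mul C)).sub (h3.const_mul D)
  simp only [mul_zero, add_zero, sub_zero, zero_add, zero_sub, neg_zero] at this
  refine this.congr (fun t => ?_)
  field_simp

theorem stmt1 (m ka kb a b : ℝ) (hm : 0 < m) (hka : 0 < ka) (hkb : ka < kb) :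
    Filter.Tendsto
      (fun t : ℝ => (1 / (kb - ka)) *
        ∫ ξ in ka..kb,
          (a * Real.cos (Real.sqrt (ξ / m) * t)
            + (b / Real.sqrt (ξ / m)) * Real.sin (Real.sqrt (ξ / m) * t)))
      Filter.atTop (nhds 0) := by
  have hm' : m ≠ 0 := hm.ne'
  set F : ℝ → ℝ → ℝ := fun t ξ =>
    2*m*a*(Real.sqrt (ξ/m) * Real.sin (Real.sqrt (ξ/m)*t)/t
      + Real.cos (Real.sqrt (ξ/m)*t)/t^2) - 2*m*b*Real.cos (Real.sqrt (ξ/m)*t)/t with hF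
  have hspos : ∀ ξ : ℝ, ξ ∈ Set.uIcc ka kb → 0 < Real.sqrt (ξ/m) := by
    intro ξ hξ
    rw [Set.uIcc_of_le hkb.le] at hξ
    exact Real.sqrt_pos.mpr (div_pos (lt_of_lt_of_le hka hξ.1) hm)
  have key : ∀ t : ℝ, t ≠ 0 →
      (∫ ξ in ka..kb, (a * Real.cos (Real.sqrt (ξ / m) * t)
        + (b / Real.sqrt (ξ / m)) * Real.sin (Real.sqrt (ξ / m) * t)))
      = F t kb - F t ka := by
    intro t ht
    have hderiv : ∀ ξ ∈ Set.uIcc ka kb,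
        HasDerivAt (fun x => F t x)
          (a * Real.cos (Real.sqrt (ξ / m) * t)
            + (b / Real.sqrt (ξ / m)) * Real.sin (Real.sqrt (ξ / m) * t)) ξ := by
      intro ξ hξ
      have hs0 : 0 < Real.sqrt (ξ/m) := hspos ξ hξ
      have hdm : ξ / m ≠ 0 := by
        have := Real.sqrt_pos.mp hs0; exact this.ne'
      have hs : HasDerivAt (fun x : ℝ => Real.sqrt (x/m))
          ((1/m) / (2 * Real.sqrt (ξ/m))) ξ := by
        have h0 : HasDerivAt (fun x : ℝ => x/m) (1/m) ξ := by
          simpa using (hasDerivAt_id ξ).div_const m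
        exact h0.sqrt hdm
      have hst : HasDerivAt (fun x : ℝ => Real.sqrt (x/m) * t)
          ((1/m) / (2 * Real.sqrt (ξ/m)) * t) ξ := hs.mul_const t
      have hsin := hst.sin
      have hcos := hst.cos
      set s := Real.sqrt (ξ/m) with hsdef
      have hD :
          HasDerivAt (fun x => F t x)
            (2*m*a*(((1/m) / (2 * Real.sqrt (ξ/m)) * Real.sin (Real.sqrt (ξ/m)*t)
              + Real.sqrt (ξ/m) * (Real.cos (Real.sqrt (ξ/m)*t) * ((1/m) / (2 * Real.sqrt (ξ/m)) * t)))/t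
              + (-Real.sin (Real.sqrt (ξ/m)*t) * ((1/m) / (2 * Real.sqrt (ξ/m)) * t))/t^2)
            - 2*m*b*(-Real.sin (Real.sqrt (ξ/m)*t) * ((1/m) / (2 * Real.sqrt (ξ/m)) * t))/t) ξ := by
        exact (((((hs.mul hsin).div_const t).add (hcos.div_const (t^2))).const_mul
          (2*m*a)).sub ((hcos.const_mul (2*m*b)).div_const t))
      convert hD using 1
      simp only [← hsdef]
      field_simp
      ring
    have hint : IntervalIntegrable (fun ξ =>
        a * Real.cos (Real.sqrt (ξ / m) * t)
          + (b / Real.sqrt (ξ / m)) * Real.sin (Real.sqrt (ξ / m) * t)) MeasureTheory.volume ka kb := by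
      apply ContinuousOn.intervalIntegrable
      have hsc : Continuous (fun ξ : ℝ => Real.sqrt (ξ/m)) :=
        Real.continuous_sqrt.comp (continuous_id.div_const m)
      apply ContinuousOn.add
      · exact (continuous_const.mul (Real.continuous_cos.comp (hsc.mul continuous_const))).continuousOn
      · exact (((continuous_const.continuousOn).div hsc.continuousOn
          (fun ξ hξ => (hspos ξ hξ).ne')).mul
          (Real.continuous_sin.comp (hsc.mul continuous_const)).continuousOn)
    exact intervalIntegral.integral_eq_sub_of_hasDerivAt hderiv hint
  have lim : Tendsto (fun t : ℝ => (1 / (kb - ka)) * (F t kb - F t ka))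
      Filter.atTop (nhds 0) := by
    have hb := Flim (Real.sqrt (kb/m)) (2*m*a) (2*m*b)
    have ha := Flim (Real.sqrt (ka/m)) (2*m*a) (2*m*b)
    have := (hb.sub ha).const_mul (1 / (kb - ka))
    simpa using this
  refine lim.congr' ?_
  filter_upwards [Filter.eventually_gt_atTop 0] with t ht
  rw [key t ht.ne']
end

section
/- With stiffness ξ uniform on [k_a,k_b], 0 < k_a < k_b, the second moment of the velocity response u̇(t,ξ) = −a·√(ξ/m)·sin(√(ξ/m)t) + b·cos(√(ξ/m)t) satisfies lim_{t→∞} (1/(k_b−k_a)) ∫_{k_a}^{k_b} u̇(t,ξ)² dξ = ((k_a+k_b)/(4m))·a² + (1/2)·b². -/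
/-!
Substituting `ξ = m x²` turns the integral into one over `x` of `a² x³ + b² x` plus
polynomial multiples of `cos (2 t x)` and `sin (2 t x)`. The oscillating terms vanish as
`t → ∞` by the Riemann–Lebesgue lemma, and the remaining integral gives the limit.
-/

open Filter MeasureTheory Real Set Topology intervalIntegral
open Complex (I)
open scoped Complex

theorem tendsto_integral_cexp_mul_atTop (f : ℝ → ℂ) :
    Tendsto (fun t : ℝ => ∫ x, cexp (↑(t * x) * I) * f x) atTop (𝓝 0) := by
  -- Mathlib's Riemann–Lebesgue lemma uses the kernel `𝐞 (-(x * w)) = exp (-2π i x w)`.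
  have hw : Tendsto (fun t : ℝ => -t / (2 * π)) atTop (cocompact ℝ) :=
    (tendsto_neg_atTop_atBot.atBot_div_const (by positivity)).mono_right atBot_le_cocompact
  refine ((Real.tendsto_integral_exp_smul_cocompact f).comp hw).congr fun t => ?_
  refine integral_congr_ae (Eventually.of_forall fun x => ?_)
  simp only [Real.fourierChar_apply, Circle.smul_def, smul_eq_mul]
  congr 2
  push_cast
  field_simp

theorem tendsto_setIntegral_cexp_mul_atTop (f : ℝ → ℂ) {s : Set ℝ} (hs : MeasurableSet s) :
    Tendsto (fun t : ℝ => ∫ x in s, cexp (↑(t * x) * I) * f x) atTop (𝓝 0) := by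
  refine (tendsto_integral_cexp_mul_atTop (s.indicator f)).congr fun t => ?_
  rw [← MeasureTheory.integral_indicator hs]
  simp only [indicator_mul_right]

theorem tendsto_intervalIntegral_cexp_mul_atTop (f : ℝ → ℂ) (α β : ℝ) :
    Tendsto (fun t : ℝ => ∫ x in α..β, cexp (↑(t * x) * I) * f x) atTop (𝓝 0) := by
  have h := (tendsto_setIntegral_cexp_mul_atTop f (measurableSet_Ioc (a := α) (b := β))).sub
    (tendsto_setIntegral_cexp_mul_atTop f (measurableSet_Ioc (a := β) (b := α)))
  rwa [sub_zero] at h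

theorem tendsto_intervalIntegral_clm_cexp_mul_atTop (L : ℂ →L[ℝ] ℝ) {f : ℝ → ℂ} {α β : ℝ}
    (hf : IntervalIntegrable f volume α β) :
    Tendsto (fun t : ℝ => ∫ x in α..β, L (cexp (↑(t * x) * I) * f x)) atTop (𝓝 0) := by
  have h := (L.continuous.tendsto 0).comp (tendsto_intervalIntegral_cexp_mul_atTop f α β)
  rw [map_zero] at h
  refine h.congr fun t => (L.intervalIntegral_comp_comm ?_).symm
  exact hf.continuousOn_mul (by fun_prop)

theorem tendsto_intervalIntegral_mul_cos_atTop {f : ℝ → ℝ} {α β : ℝ}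
    (hf : IntervalIntegrable f volume α β) :
    Tendsto (fun t : ℝ => ∫ x in α..β, f x * cos (t * x)) atTop (𝓝 0) := by
  refine (tendsto_intervalIntegral_clm_cexp_mul_atTop Complex.reCLM
    (f := fun x => (f x : ℂ)) ⟨hf.1.ofReal, hf.2.ofReal⟩).congr fun t => ?_
  congr 1 with x
  rw [Complex.reCLM_apply, Complex.re_mul_ofReal, Complex.exp_ofReal_mul_I_re, mul_comm]

theorem tendsto_intervalIntegral_mul_sin_atTop {f : ℝ → ℝ} {α β : ℝ}
    (hf : IntervalIntegrable f volume α β) :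
    Tendsto (fun t : ℝ => ∫ x in α..β, f x * sin (t * x)) atTop (𝓝 0) := by
  refine (tendsto_intervalIntegral_clm_cexp_mul_atTop Complex.imCLM
    (f := fun x => (f x : ℂ)) ⟨hf.1.ofReal, hf.2.ofReal⟩).congr fun t => ?_
  congr 1 with x
  rw [Complex.imCLM_apply, Complex.im_mul_ofReal, Complex.exp_ofReal_mul_I_im, mul_comm]

theorem tendsto_intervalIntegral_add_mul_cos_add_mul_sin_atTop {f g h : ℝ → ℝ} {α β : ℝ}
    (hf : IntervalIntegrable f volume α β) (hg : IntervalIntegrable g volume α β)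
    (hh : IntervalIntegrable h volume α β) :
    Tendsto (fun t : ℝ => ∫ x in α..β, (f x + g x * cos (t * x) + h x * sin (t * x)))
      atTop (𝓝 (∫ x in α..β, f x)) := by
  have hsplit : ∀ t : ℝ, ∫ x in α..β, (f x + g x * cos (t * x) + h x * sin (t * x)) =
      (∫ x in α..β, f x) + (∫ x in α..β, g x * cos (t * x))
        + ∫ x in α..β, h x * sin (t * x) := by
    intro t
    have hgc : IntervalIntegrable (fun x => g x * cos (t * x)) volume α β :=
      hg.mul_continuousOn (by fun_prop)
    have hhs : IntervalIntegrable (fun x => h x * sin (t * x)) volume α β :=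
      hh.mul_continuousOn (by fun_prop)
    rw [integral_add (hf.add hgc) hhs, integral_add hf hgc]
  simpa [hsplit] using (tendsto_const_nhds.add (tendsto_intervalIntegral_mul_cos_atTop hg)).add
    (tendsto_intervalIntegral_mul_sin_atTop hh)

theorem integral_comp_sqrt {g : ℝ → ℝ} (hg : Continuous g) {α β : ℝ} (hα : 0 ≤ α)
    (hβ : 0 ≤ β) :
    ∫ ξ in α..β, g (√ξ) = ∫ x in √α..√β, g x * (2 * x) := by
  have hsub := integral_comp_mul_deriv (a := √α) (b := √β) (f := fun x => x ^ 2)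
    (fun x _ => by simpa using hasDerivAt_pow 2 x) (by fun_prop) (hg.comp continuous_sqrt)
  simp only [Function.comp_apply, sq_sqrt hα, sq_sqrt hβ] at hsub
  rw [← hsub]
  refine integral_congr fun x hx => ?_
  have hx0 : 0 ≤ x := (le_min (sqrt_nonneg α) (sqrt_nonneg β)).trans hx.1
  simp [sqrt_sq hx0]

theorem integral_comp_sqrt_div {g : ℝ → ℝ} (hg : Continuous g) {m α β : ℝ} (hm : 0 < m)
    (hα : 0 ≤ α) (hβ : 0 ≤ β) :
    ∫ ξ in α..β, g √(ξ / m) = m * ∫ x in √(α / m)..√(β / m), g x * (2 * x) := by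
  rw [integral_comp_div (fun ζ => g √ζ) hm.ne', integral_comp_sqrt hg (by positivity)
    (by positivity), smul_eq_mul]

theorem sq_neg_mul_sin_add_mul_cos_mul_two_mul (a b x t : ℝ) :
    (-a * x * sin (x * t) + b * cos (x * t)) ^ 2 * (2 * x) =
      (a ^ 2 * x ^ 3 + b ^ 2 * x) + (b ^ 2 * x - a ^ 2 * x ^ 3) * cos ((2 * t) * x)
        + (-2 * a * b * x ^ 2) * sin ((2 * t) * x) := by
  rw [show 2 * t * x = 2 * (x * t) by ring, cos_two_mul, sin_two_mul]
  linear_combination (2 * a ^ 2 * x ^ 3) * sin_sq_add_cos_sq (x * t)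

theorem integral_sq_neg_mul_sin_add_mul_cos_sqrt_div (a b t : ℝ) {m ka kb : ℝ} (hm : 0 < m)
    (hka : 0 ≤ ka) (hkb : 0 ≤ kb) :
    ∫ ξ in ka..kb, (-a * √(ξ / m) * sin (√(ξ / m) * t) + b * cos (√(ξ / m) * t)) ^ 2 =
      m * ∫ x in √(ka / m)..√(kb / m), ((a ^ 2 * x ^ 3 + b ^ 2 * x)
        + (b ^ 2 * x - a ^ 2 * x ^ 3) * cos ((2 * t) * x)
        + (-2 * a * b * x ^ 2) * sin ((2 * t) * x)) := by
  rw [integral_comp_sqrt_div (g := fun y => (-a * y * sin (y * t) + b * cos (y * t)) ^ 2)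
    (by fun_prop) hm hka hkb]
  simp only [sq_neg_mul_sin_add_mul_cos_mul_two_mul]

theorem mul_integral_sq_mul_pow_three_add_sq_mul (a b : ℝ) {m ka kb : ℝ} (hm : 0 < m)
    (hka : 0 ≤ ka) (hkb : 0 ≤ kb) :
    m * ∫ x in √(ka / m)..√(kb / m), (a ^ 2 * x ^ 3 + b ^ 2 * x) =
      (kb - ka) * ((ka + kb) / (4 * m) * a ^ 2 + 1 / 2 * b ^ 2) := by
  have hsq : ∀ k, 0 ≤ k → k = m * √(k / m) ^ 2 := fun k hk => by
    rw [sq_sqrt (div_nonneg hk hm.le)]; field_simp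
  have hka' := hsq ka hka
  have hkb' := hsq kb hkb
  rw [integral_add (Continuous.intervalIntegrable (by fun_prop) _ _)
    (Continuous.intervalIntegrable (by fun_prop) _ _), intervalIntegral.integral_const_mul,
    intervalIntegral.integral_const_mul, integral_pow, integral_id]
  generalize √(ka / m) = xa at hka' ⊢
  generalize √(kb / m) = xb at hkb' ⊢
  subst hka' hkb'
  field_simp
  ring

theorem stmt2 (m ka kb a b : ℝ) (hm : 0 < m) (hka : 0 < ka) (hkb : ka < kb) :
    Filter.Tendsto
      (fun t : ℝ => (1 / (kb - ka)) *
        ∫ ξ in ka..kb,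
          (-a * Real.sqrt (ξ / m) * Real.sin (Real.sqrt (ξ / m) * t)
            + b * Real.cos (Real.sqrt (ξ / m) * t)) ^ 2)
      Filter.atTop (nhds (((ka + kb) / (4 * m)) * a ^ 2 + (1 / 2) * b ^ 2)) := by
  have hkb0 : 0 ≤ kb := (hka.trans hkb).le
  have hlim := (tendsto_intervalIntegral_add_mul_cos_add_mul_sin_atTop
    (α := √(ka / m)) (β := √(kb / m)) (f := fun x => a ^ 2 * x ^ 3 + b ^ 2 * x)
    (g := fun x => b ^ 2 * x - a ^ 2 * x ^ 3) (h := fun x => -2 * a * b * x ^ 2)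
    (Continuous.intervalIntegrable (by fun_prop) _ _)
    (Continuous.intervalIntegrable (by fun_prop) _ _)
    (Continuous.intervalIntegrable (by fun_prop) _ _)).comp (tendsto_id.const_mul_atTop two_pos)
  have hmean : 1 / (kb - ka) * (m * ∫ x in √(ka / m)..√(kb / m), (a ^ 2 * x ^ 3 + b ^ 2 * x))
      = (ka + kb) / (4 * m) * a ^ 2 + 1 / 2 * b ^ 2 := by
    rw [mul_integral_sq_mul_pow_three_add_sq_mul a b hm hka.le hkb0, ← mul_assoc,
      one_div_mul_cancel (sub_ne_zero.mpr hkb.ne'), one_mul]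
  rw [← hmean]
  exact ((hlim.const_mul m).const_mul _).congr fun t => by
    simp only [Function.comp_apply, id,
      integral_sq_neg_mul_sin_add_mul_cos_sqrt_div a b t hm hka.le hkb0]
end

section
/- With stiffness ξ uniform on [k_a,k_b], 0 < k_a < k_b, the second moment of the displacement response u(t,ξ) = a·cos(√(ξ/m)t) + (b/√(ξ/m))·sin(√(ξ/m)t) satisfies lim_{t→∞} (1/(k_b−k_a)) ∫_{k_a}^{k_b} u(t,ξ)² dξ = a²/2 + (m·b²/(2(k_b−k_a)))·ln(k_b/k_a). -/
/-!
Substituting `ξ = m s²` turns the second moment into `m ∫ 2 s u(t, s)² ds` over the frequency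
interval `[√(k_a/m), √(k_b/m)]`. By the double-angle formulas, `2 s u²` is the non-oscillatory
part `a² s + b²/s` plus terms `F(s) cos(2ts)` and `G(s) sin(2ts)` with integrable coefficients,
whose integrals vanish as `t → ∞` by the Riemann–Lebesgue lemma. What remains is
`∫ (a² s + b²/s) ds = a² (s_b² - s_a²)/2 + b² log (s_b/s_a)`, and `m s² = ξ` gives the formula.
-/

open Filter MeasureTheory Real Topology Set

theorem tendsto_integral_mul_cexp_atTop (f : ℝ → ℂ) :
    Tendsto (fun t : ℝ => ∫ x, f x * Complex.exp (↑(t * x) * Complex.I)) atTop (𝓝 0) := by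
  have hscale : Tendsto (fun t : ℝ => -t / (2 * π)) atTop (cocompact ℝ) := by
    rw [cocompact_eq_atBot_atTop]
    exact (tendsto_neg_atTop_atBot.atBot_div_const (by positivity)).mono_right le_sup_left
  refine ((Real.tendsto_integral_exp_smul_cocompact f).comp hscale).congr fun t => ?_
  refine integral_congr_ae (ae_of_all _ fun x => ?_)
  simp only [Circle.smul_def, Real.fourierChar_apply, smul_eq_mul]
  rw [mul_comm, show 2 * π * -(x * (-t / (2 * π))) = t * x by field_simp]

section RiemannLebesgue

variable {f : ℝ → ℝ}

theorem integrable_mul_cexp (hf : Integrable f) (t : ℝ) :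
    Integrable (fun x => f x * Complex.exp (↑(t * x) * Complex.I)) :=
  hf.ofReal.mul_bdd (c := 1) (by fun_prop)
    (ae_of_all _ fun _ => (Complex.norm_exp_ofReal_mul_I _).le)

theorem tendsto_integral_mul_cos_atTop (hf : Integrable f) :
    Tendsto (fun t => ∫ x, f x * cos (t * x)) atTop (𝓝 0) := by
  have h := (Complex.continuous_re.tendsto 0).comp (tendsto_integral_mul_cexp_atTop fun x => f x)
  rw [Complex.zero_re] at h
  refine h.congr fun t => ?_
  rw [Function.comp_apply, ← Complex.reCLM_apply,
    ← ContinuousLinearMap.integral_comp_comm _ (integrable_mul_cexp hf t)]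
  simp only [Complex.reCLM_apply, Complex.re_ofReal_mul, Complex.exp_ofReal_mul_I_re]

theorem tendsto_integral_mul_sin_atTop (hf : Integrable f) :
    Tendsto (fun t => ∫ x, f x * sin (t * x)) atTop (𝓝 0) := by
  have h := (Complex.continuous_im.tendsto 0).comp (tendsto_integral_mul_cexp_atTop fun x => f x)
  rw [Complex.zero_im] at h
  refine h.congr fun t => ?_
  rw [Function.comp_apply, ← Complex.imCLM_apply,
    ← ContinuousLinearMap.integral_comp_comm _ (integrable_mul_cexp hf t)]
  simp only [Complex.imCLM_apply, Complex.im_ofReal_mul, Complex.exp_ofReal_mul_I_im]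

theorem tendsto_intervalIntegral_of_tendsto_integral {k : ℝ → ℝ → ℝ} {l : Filter ℝ}
    (hk : ∀ g : ℝ → ℝ, Integrable g → Tendsto (fun t => ∫ x, g x * k t x) l (𝓝 0))
    {a b : ℝ} (hf : IntervalIntegrable f volume a b) :
    Tendsto (fun t => ∫ x in a..b, f x * k t x) l (𝓝 0) := by
  have h := (hk _ ((integrable_indicator_iff measurableSet_uIoc).2
    (intervalIntegrable_iff.1 hf))).const_smul (if a ≤ b then (1 : ℝ) else -1)
  rw [smul_zero] at h
  refine h.congr fun t => ?_
  rw [intervalIntegral.intervalIntegral_eq_integral_uIoc, ← integral_indicator measurableSet_uIoc]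
  simp_rw [indicator_mul_left]

end RiemannLebesgue

noncomputable def oscillatorResponse (a b t s : ℝ) : ℝ := a * cos (s * t) + b / s * sin (s * t)

theorem continuousOn_oscillatorResponse (a b t : ℝ) :
    ContinuousOn (oscillatorResponse a b t) {0}ᶜ :=
  ContinuousOn.add (by fun_prop)
    ((continuousOn_const.div continuousOn_id fun _ hs => hs).mul (by fun_prop))

theorem two_mul_mul_oscillatorResponse_sq (a b t : ℝ) {s : ℝ} (hs : s ≠ 0) :
    2 * s * oscillatorResponse a b t s ^ 2 =
      (a ^ 2 * s + b ^ 2 / s) + (a ^ 2 * s - b ^ 2 / s) * cos (2 * t * s)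
        + 2 * a * b * sin (2 * t * s) := by
  rw [oscillatorResponse, show 2 * t * s = 2 * (s * t) by ring, cos_two_mul, sin_two_mul]
  field_simp
  linear_combination (2 * b ^ 2) * sin_sq_add_cos_sq (s * t)

theorem tendsto_integral_mul_oscillatorResponse_sq {sa sb : ℝ} (h0 : (0 : ℝ) ∉ uIcc sa sb)
    (a b : ℝ) :
    Tendsto (fun t => ∫ s in sa..sb, 2 * s * oscillatorResponse a b t s ^ 2) atTop
      (𝓝 (a ^ 2 * ((sb ^ 2 - sa ^ 2) / 2) + b ^ 2 * log (sb / sa))) := by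
  have hne : ∀ s ∈ uIcc sa sb, s ≠ 0 := fun s hs h => h0 (h ▸ hs)
  have hlin : IntervalIntegrable (fun s => a ^ 2 * s) volume sa sb :=
    intervalIntegral.intervalIntegrable_id.const_mul _
  have hinv : IntervalIntegrable (fun s => b ^ 2 / s) volume sa sb :=
    (continuousOn_const.div continuousOn_id hne).intervalIntegrable
  have hP := hlin.add hinv
  have hF := hlin.sub hinv
  have hG : IntervalIntegrable (fun _ => 2 * a * b) volume sa sb := intervalIntegrable_const
  have hcos : Tendsto (fun t => ∫ s in sa..sb, (a ^ 2 * s - b ^ 2 / s) * cos (2 * t * s))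
      atTop (𝓝 0) :=
    (tendsto_intervalIntegral_of_tendsto_integral (fun _ => tendsto_integral_mul_cos_atTop)
      hF).comp (tendsto_id.const_mul_atTop two_pos)
  have hsin : Tendsto (fun t => ∫ s in sa..sb, 2 * a * b * sin (2 * t * s)) atTop (𝓝 0) :=
    (tendsto_intervalIntegral_of_tendsto_integral (fun _ => tendsto_integral_mul_sin_atTop)
      hG).comp (tendsto_id.const_mul_atTop two_pos)
  have hvalue : ∫ s in sa..sb, (a ^ 2 * s + b ^ 2 / s)
      = a ^ 2 * ((sb ^ 2 - sa ^ 2) / 2) + b ^ 2 * log (sb / sa) := by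
    rw [intervalIntegral.integral_add hlin hinv]
    simp_rw [div_eq_mul_one_div (b ^ 2)]
    rw [intervalIntegral.integral_const_mul, intervalIntegral.integral_const_mul, integral_id,
      integral_one_div h0]
  rw [← hvalue]
  have h := (hcos.add hsin).const_add (∫ s in sa..sb, (a ^ 2 * s + b ^ 2 / s))
  rw [add_zero, add_zero] at h
  refine h.congr fun t => ?_
  rw [intervalIntegral.integral_congr fun s hs =>
      two_mul_mul_oscillatorResponse_sq a b t (hne s hs),
    intervalIntegral.integral_add (hP.add (hF.mul_continuousOn (by fun_prop)))
      (hG.mul_continuousOn (by fun_prop)),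
    intervalIntegral.integral_add hP (hF.mul_continuousOn (by fun_prop)), add_assoc]

theorem integral_comp_sqrt_div_s3 {m ka kb : ℝ} (hm : 0 < m) (hka : 0 < ka) (hkb : 0 < kb)
    {g : ℝ → ℝ} (hg : ContinuousOn g (Ioi 0)) :
    ∫ ξ in ka..kb, g √(ξ / m) = m * ∫ s in √(ka / m)..√(kb / m), 2 * s * g s := by
  have hsq : ∀ {k}, 0 < k → m * √(k / m) ^ 2 = k := fun hk => by
    rw [sq_sqrt (div_pos hk hm).le]; field_simp
  have hpos : ∀ s ∈ uIcc √(ka / m) √(kb / m), 0 < s := fun s hs =>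
    (lt_min (sqrt_pos.2 (div_pos hka hm)) (sqrt_pos.2 (div_pos hkb hm))).trans_le hs.1
  have hderiv : ∀ s ∈ uIcc √(ka / m) √(kb / m), HasDerivAt (fun s => m * s ^ 2) (2 * m * s) s :=
    fun s _ => ((hasDerivAt_pow 2 s).const_mul m).congr_deriv (by ring)
  have hgcomp : ContinuousOn (fun ξ => g √(ξ / m))
      ((fun s => m * s ^ 2) '' uIcc √(ka / m) √(kb / m)) := by
    refine hg.comp (by fun_prop) ?_
    rintro _ ⟨s, hs, rfl⟩
    exact sqrt_pos.2 (div_pos (by have := hpos s hs; positivity) hm)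
  have h := intervalIntegral.integral_comp_mul_deriv' hderiv (by fun_prop) hgcomp
  rw [hsq hka, hsq hkb] at h
  rw [← h, ← intervalIntegral.integral_const_mul]
  refine intervalIntegral.integral_congr fun s hs => ?_
  simp only [Function.comp_apply]
  rw [mul_div_cancel_left₀ _ hm.ne', sqrt_sq (hpos s hs).le]
  ring

theorem stmt3 (m ka kb a b : ℝ) (hm : 0 < m) (hka : 0 < ka) (hkb : ka < kb) :
    Filter.Tendsto
      (fun t : ℝ => (1 / (kb - ka)) *
        ∫ ξ in ka..kb,
          (a * Real.cos (Real.sqrt (ξ / m) * t)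
            + (b / Real.sqrt (ξ / m)) * Real.sin (Real.sqrt (ξ / m) * t)) ^ 2)
      Filter.atTop
      (nhds (a ^ 2 / 2 + (m * b ^ 2 / (2 * (kb - ka))) * Real.log (kb / ka))) := by
  have hkb0 : 0 < kb := hka.trans hkb
  have hsa : 0 < √(ka / m) := sqrt_pos.2 (div_pos hka hm)
  have hsb : 0 < √(kb / m) := sqrt_pos.2 (div_pos hkb0 hm)
  have h0 : (0 : ℝ) ∉ uIcc √(ka / m) √(kb / m) := fun h => (lt_min hsa hsb).not_ge h.1
  convert ((tendsto_integral_mul_oscillatorResponse_sq h0 a b).const_mul m).const_mul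
    (1 / (kb - ka)) using 2 with t
  · exact congrArg _ (integral_comp_sqrt_div_s3 hm hka hkb0
      (((continuousOn_oscillatorResponse a b t).mono fun _ hs => ne_of_gt hs).pow 2))
  · have hlog : log (√(kb / m) / √(ka / m)) = log (kb / ka) / 2 := by
      rw [← sqrt_div' _ (div_pos hka hm).le, div_div_div_cancel_right₀ hm.ne',
        log_sqrt (div_pos hkb0 hka).le]
    rw [sq_sqrt (div_pos hka hm).le, sq_sqrt (div_pos hkb0 hm).le, hlog]
    field_simp [(sub_pos.2 hkb).ne']
end

section
/- With stiffness ξ uniform on [k_a,k_b], 0 < k_a < k_b, the second moment of the acceleration response ü(t,ξ) = −(ξ/m)·u(t,ξ), where u(t,ξ) = a·cos(√(ξ/m)t) + (b/√(ξ/m))·sin(√(ξ/m)t), satisfies lim_{t→∞} (1/(k_b−k_a)) ∫_{k_a}^{k_b} ü(t,ξ)² dξ = ((k_a² + k_a·k_b + k_b²)/(6m²))·a² + ((k_a+k_b)/(4m))·b². -/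
/-!
Expanding the square with the double-angle formulas splits `ü(t, ξ)²` into the mean
`a² ξ² / (2 m²) + b² ξ / (2 m)`, independent of `t`, plus terms `g ξ * cos (2 √(ξ / m) t)` and
`g ξ * sin (2 √(ξ / m) t)` with `g` continuous. The substitution `ξ = m x²` turns the integrals
of the latter into Fourier integrals `∫ h x * cos (2 x t) dx` over a compact interval, which
vanish as `t → ∞` by the Riemann–Lebesgue lemma. Averaging the mean over `[k_a, k_b]` gives
the limit.
-/

open Filter Topology Real MeasureTheory Set

section RiemannLebesgue

open Complex

theorem tendsto_setIntegral_cexp_mul {s : Set ℝ} (hs : MeasurableSet s) (f : ℝ → ℂ) :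
    Tendsto (fun t : ℝ => ∫ x in s, cexp (x * t * I) * f x) atTop (𝓝 0) := by
  have hφ : Tendsto (fun t : ℝ => -t / (2 * π)) atTop (cocompact ℝ) :=
    (tendsto_neg_atTop_atBot.atBot_div_const (by positivity)).mono_right atBot_le_cocompact
  refine ((Real.tendsto_integral_exp_smul_cocompact (s.indicator f)).comp hφ).congr
    fun t => ?_
  rw [← integral_indicator hs]
  refine integral_congr_ae (ae_of_all _ fun x => ?_)
  by_cases hx : x ∈ s
  · simp only [indicator_of_mem hx, Circle.smul_def, fourierChar_apply]
    congr 2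
    push_cast
    field_simp
  · simp [indicator_of_notMem hx]

theorem tendsto_intervalIntegral_cexp_mul (f : ℝ → ℂ) (α β : ℝ) :
    Tendsto (fun t : ℝ => ∫ x in α..β, cexp (x * t * I) * f x) atTop (𝓝 0) := by
  have h := (tendsto_setIntegral_cexp_mul (measurableSet_Ioc (a := α) (b := β)) f).sub
    (tendsto_setIntegral_cexp_mul (measurableSet_Ioc (a := β) (b := α)) f)
  rw [sub_zero] at h
  exact h.congr fun t => rfl

variable {f : ℝ → ℝ} {α β : ℝ}

theorem IntervalIntegrable.cexp_mul_ofReal (hf : IntervalIntegrable f volume α β) (t : ℝ) :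
    IntervalIntegrable (fun x : ℝ => cexp (x * t * I) * f x) volume α β :=
  IntervalIntegrable.continuousOn_mul ⟨hf.1.ofReal, hf.2.ofReal⟩ (by fun_prop)

theorem tendsto_intervalIntegral_mul_cos (hf : IntervalIntegrable f volume α β) :
    Tendsto (fun t => ∫ x in α..β, f x * Real.cos (x * t)) atTop (𝓝 0) := by
  refine (continuous_re.tendsto' 0 0 rfl |>.comp
    (tendsto_intervalIntegral_cexp_mul (fun x => (f x : ℂ)) α β)).congr fun t => ?_
  rw [Function.comp_apply, ← RCLike.re_to_complex,
    ← intervalIntegral.intervalIntegral_re (hf.cexp_mul_ofReal t)]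
  congr 1 with x
  rw [RCLike.re_to_complex, re_mul_ofReal, ← ofReal_mul, exp_ofReal_mul_I_re, mul_comm]

theorem tendsto_intervalIntegral_mul_sin (hf : IntervalIntegrable f volume α β) :
    Tendsto (fun t => ∫ x in α..β, f x * Real.sin (x * t)) atTop (𝓝 0) := by
  refine (continuous_im.tendsto' 0 0 rfl |>.comp
    (tendsto_intervalIntegral_cexp_mul (fun x => (f x : ℂ)) α β)).congr fun t => ?_
  rw [Function.comp_apply, ← RCLike.im_to_complex,
    ← intervalIntegral.intervalIntegral_im (hf.cexp_mul_ofReal t)]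
  congr 1 with x
  rw [RCLike.im_to_complex, im_mul_ofReal, ← ofReal_mul, exp_ofReal_mul_I_im, mul_comm]

end RiemannLebesgue

section SqrtPhase

variable {g : ℝ → ℝ} {m ka kb : ℝ}

theorem integral_mul_comp_sqrt_div {ψ : ℝ → ℝ} (hg : Continuous g) (hψ : Continuous ψ)
    (hm : 0 < m) (hka : 0 ≤ ka) (hkb : 0 ≤ kb) (t : ℝ) :
    ∫ ξ in ka..kb, g ξ * ψ (√(ξ / m) * t) =
      ∫ x in √(ka / m)..√(kb / m), 2 * m * x * g (m * x ^ 2) * ψ (x * t) := by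
  have hsq : ∀ k, 0 ≤ k → m * √(k / m) ^ 2 = k := fun k hk => by
    rw [sq_sqrt (by positivity)]
    field_simp
  have hsub := intervalIntegral.integral_comp_mul_deriv (a := √(ka / m)) (b := √(kb / m))
    (f := fun x => m * x ^ 2) (g := fun ξ => g ξ * ψ (√(ξ / m) * t))
    (fun x _ => by simpa [mul_comm, mul_assoc] using (hasDerivAt_pow 2 x).const_mul m)
    (by fun_prop) (by fun_prop)
  rw [hsq ka hka, hsq kb hkb] at hsub
  rw [← hsub]
  refine intervalIntegral.integral_congr fun x hx => ?_
  have hx : 0 ≤ x := (le_min (sqrt_nonneg _) (sqrt_nonneg _)).trans hx.1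
  simp only [Function.comp_apply, mul_div_cancel_left₀ _ hm.ne', sqrt_sq hx]
  ring

theorem tendsto_integral_mul_cos_sqrt_div (hg : Continuous g) (hm : 0 < m) (hka : 0 ≤ ka)
    (hkb : 0 ≤ kb) :
    Tendsto (fun t => ∫ ξ in ka..kb, g ξ * cos (√(ξ / m) * t)) atTop (𝓝 0) :=
  (tendsto_intervalIntegral_mul_cos (Continuous.intervalIntegrable (by fun_prop) _ _)).congr
    fun t => (integral_mul_comp_sqrt_div hg continuous_cos hm hka hkb t).symm

theorem tendsto_integral_mul_sin_sqrt_div (hg : Continuous g) (hm : 0 < m) (hka : 0 ≤ ka)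
    (hkb : 0 ≤ kb) :
    Tendsto (fun t => ∫ ξ in ka..kb, g ξ * sin (√(ξ / m) * t)) atTop (𝓝 0) :=
  (tendsto_intervalIntegral_mul_sin (Continuous.intervalIntegrable (by fun_prop) _ _)).congr
    fun t => (integral_mul_comp_sqrt_div hg continuous_sin hm hka hkb t).symm

end SqrtPhase

noncomputable def acceleration (m a b t ξ : ℝ) : ℝ :=
  -(ξ / m) * (a * cos (√(ξ / m) * t) + (b / √(ξ / m)) * sin (√(ξ / m) * t))

theorem acceleration_sq {m ξ : ℝ} (hξ : 0 < ξ / m) (a b t : ℝ) :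
    acceleration m a b t ξ ^ 2 =
      (a ^ 2 / (2 * m ^ 2) * ξ ^ 2 + b ^ 2 / (2 * m) * ξ)
      + (a ^ 2 / (2 * m ^ 2) * ξ ^ 2 - b ^ 2 / (2 * m) * ξ) * cos (√(ξ / m) * (2 * t))
      + a * b / m * ξ * √(ξ / m) * sin (√(ξ / m) * (2 * t)) := by
  have hm : m ≠ 0 := by rintro rfl; simp at hξ
  have hω0 : √(ξ / m) ≠ 0 := (sqrt_pos.mpr hξ).ne'
  have hξω : ξ = m * √(ξ / m) ^ 2 := by rw [sq_sqrt hξ.le]; field_simp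
  rw [acceleration, mul_left_comm _ (2 : ℝ), cos_two_mul, sin_two_mul]
  generalize √(ξ / m) = ω at *
  subst hξω
  field_simp
  linear_combination 2 * b ^ 2 * sin_sq_add_cos_sq (ω * t)

theorem stmt4 (m ka kb a b : ℝ) (hm : 0 < m) (hka : 0 < ka) (hkb : ka < kb) :
    Filter.Tendsto
      (fun t : ℝ => (1 / (kb - ka)) *
        ∫ ξ in ka..kb,
          (-(ξ / m) * (a * Real.cos (Real.sqrt (ξ / m) * t)
            + (b / Real.sqrt (ξ / m)) * Real.sin (Real.sqrt (ξ / m) * t))) ^ 2)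
      Filter.atTop
      (nhds (((ka ^ 2 + ka * kb + kb ^ 2) / (6 * m ^ 2)) * a ^ 2
        + ((ka + kb) / (4 * m)) * b ^ 2)) := by
  simp only [← acceleration.eq_1]
  set mean : ℝ → ℝ := fun ξ => a ^ 2 / (2 * m ^ 2) * ξ ^ 2 + b ^ 2 / (2 * m) * ξ
  set A : ℝ → ℝ := fun ξ => a ^ 2 / (2 * m ^ 2) * ξ ^ 2 - b ^ 2 / (2 * m) * ξ
  set B : ℝ → ℝ := fun ξ => a * b / m * ξ * √(ξ / m)
  have hsplit : ∀ t, ∫ ξ in ka..kb, acceleration m a b t ξ ^ 2 =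
      (∫ ξ in ka..kb, mean ξ) + (∫ ξ in ka..kb, A ξ * cos (√(ξ / m) * (2 * t)))
        + ∫ ξ in ka..kb, B ξ * sin (√(ξ / m) * (2 * t)) := by
    intro t
    rw [← intervalIntegral.integral_add, ← intervalIntegral.integral_add]
    · refine intervalIntegral.integral_congr fun ξ hξ => acceleration_sq ?_ a b t
      rw [uIcc_of_le hkb.le] at hξ
      exact div_pos (hka.trans_le hξ.1) hm
    all_goals exact Continuous.intervalIntegrable (by fun_prop) _ _
  have hmean : 1 / (kb - ka) * ∫ ξ in ka..kb, mean ξ =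
      (ka ^ 2 + ka * kb + kb ^ 2) / (6 * m ^ 2) * a ^ 2 + (ka + kb) / (4 * m) * b ^ 2 := by
    rw [intervalIntegral.integral_add, intervalIntegral.integral_const_mul,
      intervalIntegral.integral_const_mul, integral_pow, integral_id]
    · field_simp [(sub_pos.mpr hkb).ne']
      ring
    all_goals exact Continuous.intervalIntegrable (by fun_prop) _ _
  have h2t : Tendsto (fun t : ℝ => 2 * t) atTop atTop := tendsto_id.const_mul_atTop two_pos
  have hkb0 : 0 ≤ kb := hka.le.trans hkb.le
  have hA := (tendsto_integral_mul_cos_sqrt_div (g := A) (by fun_prop) hm hka.le hkb0).comp h2t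
  have hB := (tendsto_integral_mul_sin_sqrt_div (g := B) (by fun_prop) hm hka.le hkb0).comp h2t
  rw [← hmean]
  simpa only [hsplit, Function.comp_apply, add_zero] using
    ((tendsto_const_nhds.add hA).add hB).const_mul (1 / (kb - ka))
end

section
/- For the free-vibration solution u(t,ξ) with stiffness ξ uniform on [k_a,k_b] (0 < k_a < k_b), the exact mean satisfies E[u](t) = (2m/((k_b−k_a)t²))·(τ_u(t,k_b) − τ_u(t,k_a)) for t > 0, where τ_u(t,k) = (ω(k)t·sin(ω(k)t) + cos(ω(k)t))·a − cos(ω(k)t)·b·t and ω(k) = √(k/m). -/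
theorem stmt13 (m ka kb a b t : ℝ) (hm : 0 < m) (hka : 0 < ka) (hkb : ka < kb)
    (ht : 0 < t) :
    (1 / (kb - ka)) *
      ∫ ξ in ka..kb,
        (a * Real.cos (Real.sqrt (ξ / m) * t)
          + (b / Real.sqrt (ξ / m)) * Real.sin (Real.sqrt (ξ / m) * t))
    = (2 * m / ((kb - ka) * t ^ 2)) *
      (((Real.sqrt (kb / m) * t * Real.sin (Real.sqrt (kb / m) * t)
          + Real.cos (Real.sqrt (kb / m) * t)) * a
        - Real.cos (Real.sqrt (kb / m) * t) * b * t)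
      - ((Real.sqrt (ka / m) * t * Real.sin (Real.sqrt (ka / m) * t)
          + Real.cos (Real.sqrt (ka / m) * t)) * a
        - Real.cos (Real.sqrt (ka / m) * t) * b * t)) := by
  have hm' : m ≠ 0 := hm.ne'
  have ht' : t ≠ 0 := ht.ne'
  set F : ℝ → ℝ := fun ξ => (2 * m / t ^ 2) *
      ((Real.sqrt (ξ / m) * t * Real.sin (Real.sqrt (ξ / m) * t)
        + Real.cos (Real.sqrt (ξ / m) * t)) * a
      - Real.cos (Real.sqrt (ξ / m) * t) * b * t) with hF
  have hpos : ∀ ξ ∈ Set.uIcc ka kb, 0 < Real.sqrt (ξ / m) := by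
    intro ξ hξ
    rw [Set.uIcc_of_le hkb.le] at hξ
    exact Real.sqrt_pos.2 (div_pos (lt_of_lt_of_le hka hξ.1) hm)
  have key : ∀ ξ ∈ Set.uIcc ka kb, HasDerivAt F
      (a * Real.cos (Real.sqrt (ξ / m) * t)
        + (b / Real.sqrt (ξ / m)) * Real.sin (Real.sqrt (ξ / m) * t)) ξ := by
    intro ξ hξ
    have hω : 0 < Real.sqrt (ξ / m) := hpos ξ hξ
    have hξm : ξ / m ≠ 0 := by
      intro h; rw [h, Real.sqrt_zero] at hω; exact lt_irrefl 0 hω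
    have h1 : HasDerivAt (fun x : ℝ => x / m) (1 / m) ξ := by
      simpa using (hasDerivAt_id ξ).div_const m
    have hd : HasDerivAt (fun x => Real.sqrt (x / m))
        (1 / (2 * Real.sqrt (ξ / m)) * (1 / m)) ξ :=
      (Real.hasDerivAt_sqrt hξm).comp ξ h1
    have hg : HasDerivAt (fun x => Real.sqrt (x / m) * t)
        (1 / (2 * Real.sqrt (ξ / m)) * (1 / m) * t) ξ := hd.mul_const t
    have hD : HasDerivAt F
        ((2 * m / t ^ 2) *
          (((1 / (2 * Real.sqrt (ξ / m)) * (1 / m) * t) * Real.sin (Real.sqrt (ξ / m) * t)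
            + Real.sqrt (ξ / m) * t *
              (Real.cos (Real.sqrt (ξ / m) * t) * (1 / (2 * Real.sqrt (ξ / m)) * (1 / m) * t))
            + (-Real.sin (Real.sqrt (ξ / m) * t) * (1 / (2 * Real.sqrt (ξ / m)) * (1 / m) * t))) * a
          - (-Real.sin (Real.sqrt (ξ / m) * t) * (1 / (2 * Real.sqrt (ξ / m)) * (1 / m) * t)) * b * t)) ξ := by
      exact (((((hg.mul hg.sin).add hg.cos).mul_const a).sub ((hg.cos.mul_const b).mul_const t)).const_mul _)
    convert hD using 1
    set ω := Real.sqrt (ξ / m) with hωdef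
    field_simp
    ring
  have hcont : ContinuousOn
      (fun ξ => a * Real.cos (Real.sqrt (ξ / m) * t)
        + (b / Real.sqrt (ξ / m)) * Real.sin (Real.sqrt (ξ / m) * t)) (Set.uIcc ka kb) := by
    apply ContinuousOn.add
    · fun_prop
    · apply ContinuousOn.mul
      · exact continuousOn_const.div (by fun_prop) (fun ξ hξ => (hpos ξ hξ).ne')
      · fun_prop
  rw [intervalIntegral.integral_eq_sub_of_hasDerivAt key hcont.intervalIntegrable]
  rw [hF]
  have hkk : kb - ka ≠ 0 := sub_ne_zero.2 hkb.ne'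
  field_simp
end
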